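/- Under the hypotheses of the two residual bounds (RIP of order R+K with constant δ < 1/2, X K-row-sparse, B = AX + W), define ζ = ‖W‖_F / ‖X_{Γᶜ,:}‖_F and η_i = ‖X_{Γᶜ,:}‖_F / ‖X_{T̂_iᶜ,:}‖_F (with the denominators nonzero). If (√(1+δ)/(1−δ))·(1 + δ + 3ζ) ≤ (1−2δ)/(η_i·√(1−δ)) − ζ, then the MMV-FACS residual satisfies ‖R‖_F ≤ ‖R_i‖_F, i.e., the fused residual is no larger in Frobenius norm than that of the i-th participating algorithm. -/

import Mathlib

open scoped BigOperators
open Matrix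

noncomputable def frob {m n : Type*} [Fintype m] [Fintype n] (X : Matrix m n ℝ) : ℝ :=
  Real.sqrt (∑ i, ∑ j, (X i j) ^ 2)

noncomputable def rowNorm {m n : Type*} [Fintype n] (X : Matrix m n ℝ) (i : m) : ℝ :=
  Real.sqrt (∑ j, (X i j) ^ 2)

noncomputable def norm21 {m n : Type*} [Fintype m] [Fintype n] (X : Matrix m n ℝ) : ℝ :=
  ∑ i, rowNorm X i

noncomputable def restrictRows {m n : Type*} (X : Matrix m n ℝ) (S : Set m) : Matrix m n ℝ :=
  fun i j => S.indicator (fun i' => X i' j) i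

noncomputable def vnorm {m : Type*} [Fintype m] (v : m → ℝ) : ℝ :=
  Real.sqrt (∑ i, (v i) ^ 2)

/-- `X` has at most `s` nonzero rows. -/
def rowSparse {m n : Type*} (X : Matrix m n ℝ) (s : ℕ) : Prop :=
  {i | X i ≠ 0}.ncard ≤ s

/-- Column submatrix of `A` with columns indexed by `S`. -/
def colSub {M N : ℕ} (A : Matrix (Fin M) (Fin N) ℝ) (S : Finset (Fin N)) :
    Matrix (Fin M) {j // j ∈ S} ℝ :=
  A.submatrix id (fun j => (j : Fin N))

/-- `D` is the Moore–Penrose pseudo-inverse of `A` (the four Penrose conditions). -/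
def IsPinv {m n : Type*} [Fintype m] [Fintype n] (A : Matrix m n ℝ) (D : Matrix n m ℝ) : Prop :=
  A * D * A = A ∧ D * A * D = D ∧ (A * D)ᵀ = A * D ∧ (D * A)ᵀ = D * A

/-- Restricted isometry property of order `s` with constant `δ`. -/
def RIP {M N : ℕ} (A : Matrix (Fin M) (Fin N) ℝ) (s : ℕ) (δ : ℝ) : Prop :=
  ∀ x : Fin N → ℝ, {i | x i ≠ 0}.ncard ≤ s →
    (1 - δ) * (∑ i, (x i) ^ 2) ≤ (∑ i, (A.mulVec x i) ^ 2) ∧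
      (∑ i, (A.mulVec x i) ^ 2) ≤ (1 + δ) * (∑ i, (x i) ^ 2)








namespace Aux

lemma frob_nonneg {m n : Type*} [Fintype m] [Fintype n] (X : Matrix m n ℝ) : 0 ≤ frob X :=
  Real.sqrt_nonneg _

lemma sumsq_nonneg {m n : Type*} [Fintype m] [Fintype n] (X : Matrix m n ℝ) :
    0 ≤ ∑ i, ∑ j, (X i j) ^ 2 :=
  Finset.sum_nonneg fun _ _ => Finset.sum_nonneg fun _ _ => sq_nonneg _

lemma frob_sq {m n : Type*} [Fintype m] [Fintype n] (X : Matrix m n ℝ) :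
    frob X ^ 2 = ∑ i, ∑ j, (X i j) ^ 2 :=
  Real.sq_sqrt (sumsq_nonneg X)

lemma frob_eq_norm {m n : Type*} [Fintype m] [Fintype n] (X : Matrix m n ℝ) :
    frob X = ‖((EuclideanSpace.equiv (m × n) ℝ).symm fun p => X p.1 p.2)‖ := by
  rw [EuclideanSpace.norm_eq, frob]
  congr 1
  simp [EuclideanSpace.equiv, PiLp.toLp_apply, Real.norm_eq_abs, sq_abs,
    Fintype.sum_prod_type]

lemma frob_triangle {m n : Type*} [Fintype m] [Fintype n] (X Y : Matrix m n ℝ) :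
    frob (X + Y) ≤ frob X + frob Y := by
  rw [frob_eq_norm, frob_eq_norm, frob_eq_norm]
  have : ((EuclideanSpace.equiv (m × n) ℝ).symm fun p => (X + Y) p.1 p.2)
      = ((EuclideanSpace.equiv (m × n) ℝ).symm fun p => X p.1 p.2)
        + ((EuclideanSpace.equiv (m × n) ℝ).symm fun p => Y p.1 p.2) := by
    rw [← map_add]; rfl
  rw [this]; exact norm_add_le _ _

lemma frob_neg {m n : Type*} [Fintype m] [Fintype n] (X : Matrix m n ℝ) :
    frob (-X) = frob X := by
  unfold frob; congr 1; simp

lemma frob_sub_le {m n : Type*} [Fintype m] [Fintype n] (X Y : Matrix m n ℝ) :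
    frob X - frob Y ≤ frob (X + Y) := by
  have h := frob_triangle (X + Y) (-Y)
  have : X + Y + -Y = X := by abel
  rw [this, frob_neg] at h
  linarith

lemma frob_mono_entry {m n : Type*} [Fintype m] [Fintype n] (X Y : Matrix m n ℝ)
    (h : ∀ i j, X i j ^ 2 ≤ Y i j ^ 2) : frob X ≤ frob Y := by
  apply Real.sqrt_le_sqrt
  exact Finset.sum_le_sum fun i _ => Finset.sum_le_sum fun j _ => h i j

lemma frob_col {m n : Type*} [Fintype m] [Fintype n] (X : Matrix m n ℝ) :
    frob X = Real.sqrt (∑ j, ∑ i, (X i j) ^ 2) := by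
  rw [frob, Finset.sum_comm]

lemma frob_le_of_col {m m' n : Type*} [Fintype m] [Fintype m'] [Fintype n] {c : ℝ} (hc : 0 ≤ c)
    (X : Matrix m n ℝ) (Y : Matrix m' n ℝ)
    (h : ∀ j, ∑ i, X i j ^ 2 ≤ c * ∑ i, Y i j ^ 2) :
    frob X ≤ Real.sqrt c * frob Y := by
  rw [frob_col, frob_col, ← Real.sqrt_mul hc]
  apply Real.sqrt_le_sqrt
  rw [Finset.mul_sum]
  exact Finset.sum_le_sum fun j _ => h j

lemma frob_ge_of_col {m m' n : Type*} [Fintype m] [Fintype m'] [Fintype n] {c : ℝ} (hc : 0 ≤ c)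
    (X : Matrix m n ℝ) (Y : Matrix m' n ℝ)
    (h : ∀ j, c * ∑ i, Y i j ^ 2 ≤ ∑ i, X i j ^ 2) :
    Real.sqrt c * frob Y ≤ frob X := by
  rw [frob_col, frob_col, ← Real.sqrt_mul hc]
  apply Real.sqrt_le_sqrt
  rw [Finset.mul_sum]
  exact Finset.sum_le_sum fun j _ => h j



variable {M N L : ℕ}

/-- extend a vector on `S` by zero -/
noncomputable def vlift {N : ℕ} (S : Finset (Fin N)) (z : {j // j ∈ S} → ℝ) : Fin N → ℝ :=
  fun i => if h : i ∈ S then z ⟨i, h⟩ else 0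

/-- extend a matrix with rows on `S` by zero rows -/
noncomputable def mlift {N L : ℕ} (S : Finset (Fin N)) (Z : Matrix {j // j ∈ S} (Fin L) ℝ) :
    Matrix (Fin N) (Fin L) ℝ :=
  fun i j => if h : i ∈ S then Z ⟨i, h⟩ j else 0

lemma sum_vlift {S : Finset (Fin N)} (f : Fin N → ℝ) (hf : ∀ i ∉ S, f i = 0) :
    ∑ i, f i = ∑ s : {j // j ∈ S}, f s := by
  have h1 : ∑ i, f i = ∑ i ∈ S, f i :=
    (Finset.sum_subset (Finset.subset_univ S) (fun i _ hi => hf i hi)).symm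
  rw [h1]
  exact Finset.sum_subtype S (fun x => Iff.rfl) f

lemma mulVec_colSub (A : Matrix (Fin M) (Fin N) ℝ) (S : Finset (Fin N))
    (z : {j // j ∈ S} → ℝ) :
    (colSub A S) *ᵥ z = A *ᵥ (vlift S z) := by
  funext i
  show ∑ s, colSub A S i s * z s = ∑ k, A i k * vlift S z k
  rw [sum_vlift (fun k => A i k * vlift S z k)]
  · apply Finset.sum_congr rfl
    intro s _
    simp [colSub, vlift, Matrix.submatrix]
  · intro k hk
    simp [vlift, hk]

lemma sumsq_vlift (S : Finset (Fin N)) (z : {j // j ∈ S} → ℝ) :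
    ∑ i, (vlift S z i) ^ 2 = ∑ s, (z s) ^ 2 := by
  rw [sum_vlift (fun i => (vlift S z i) ^ 2)]
  · apply Finset.sum_congr rfl
    intro s _; simp [vlift]
  · intro k hk; simp [vlift, hk]

lemma frob_mlift (S : Finset (Fin N)) (Z : Matrix {j // j ∈ S} (Fin L) ℝ) :
    frob (mlift S Z) = frob Z := by
  unfold frob
  congr 1
  rw [sum_vlift (fun i => ∑ j, (mlift S Z i j) ^ 2)]
  · apply Finset.sum_congr rfl
    intro s _; apply Finset.sum_congr rfl; intro j _; simp [mlift]
  · intro k hk; simp [mlift, hk]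

lemma mulVec_mlift_col (A : Matrix (Fin M) (Fin N) ℝ) (S : Finset (Fin N))
    (Z : Matrix {j // j ∈ S} (Fin L) ℝ) :
    colSub A S * Z = A * mlift S Z := by
  ext i j
  show ∑ s, colSub A S i s * Z s j = ∑ k, A i k * mlift S Z k j
  rw [sum_vlift (fun k => A i k * mlift S Z k j)]
  · apply Finset.sum_congr rfl
    intro s _; simp [colSub, mlift, Matrix.submatrix]
  · intro k hk; simp [mlift, hk]

lemma ncard_supp_le {N : ℕ} {v : Fin N → ℝ} {s : Finset (Fin N)}
    (h : ∀ i, v i ≠ 0 → i ∈ s) : {i | v i ≠ 0}.ncard ≤ s.card := by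
  have h1 : {i | v i ≠ 0} ⊆ (s : Set (Fin N)) := fun i hi => h i hi
  calc {i | v i ≠ 0}.ncard ≤ (s : Set (Fin N)).ncard :=
        Set.ncard_le_ncard h1 (s : Set (Fin N)).toFinite
    _ = s.card := Set.ncard_coe_finset s

lemma col_mul (A : Matrix (Fin M) (Fin N) ℝ) (X : Matrix (Fin N) (Fin L) ℝ) (j : Fin L) :
    (fun i => (A * X) i j) = A *ᵥ (fun k => X k j) := by
  funext i
  simp [Matrix.mul_apply, Matrix.mulVec, dotProduct]

lemma restrict_split (X : Matrix (Fin N) (Fin L) ℝ) (S : Set (Fin N)) :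
    X = restrictRows X S + restrictRows X Sᶜ := by
  ext i j
  by_cases h : i ∈ S <;>
    simp [restrictRows, Set.indicator, h, Matrix.add_apply]


section RIPfacts

variable {M N s : ℕ} {A : Matrix (Fin M) (Fin N) ℝ} {δ : ℝ}

lemma sum_sq_expand {ι : Type*} [Fintype ι] (a b : ι → ℝ) :
    ∑ i, (a i + b i) ^ 2 = ∑ i, a i ^ 2 + 2 * (∑ i, a i * b i) + ∑ i, b i ^ 2 := by
  rw [Finset.mul_sum, ← Finset.sum_add_distrib, ← Finset.sum_add_distrib]
  apply Finset.sum_congr rfl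
  intro i _; ring

/-- base polarization bound for disjointly supported vectors -/
lemma inner_base (hA : RIP A s δ) (u v : Fin N → ℝ) (hdis : ∀ i, u i = 0 ∨ v i = 0)
    (hcard : ({i | u i ≠ 0} ∪ {i | v i ≠ 0}).ncard ≤ s) :
    ∑ i, (A *ᵥ u) i * (A *ᵥ v) i ≤ δ / 2 * (∑ i, u i ^ 2 + ∑ i, v i ^ 2) := by
  have hsub : ∀ w : Fin N → ℝ, (∀ i, w i ≠ 0 → u i ≠ 0 ∨ v i ≠ 0) →
      {i | w i ≠ 0}.ncard ≤ s := by
    intro w hw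
    refine le_trans (Set.ncard_le_ncard (fun i hi => hw i hi)
      (Set.toFinite _)) hcard
  have h1 := hA (u + v) (hsub _ (by
    intro i hi
    by_contra hc
    push_neg at hc
    simp [Pi.add_apply, hc.1, hc.2] at hi))
  have h2 := hA (u - v) (hsub _ (by
    intro i hi
    by_contra hc
    push_neg at hc
    simp [Pi.sub_apply, hc.1, hc.2] at hi))
  have huv : ∑ i, u i * v i = 0 := by
    apply Finset.sum_eq_zero
    intro i _
    rcases hdis i with h | h <;> simp [h]
  have e1 : ∑ i, ((u + v) i) ^ 2 = ∑ i, u i ^ 2 + ∑ i, v i ^ 2 := by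
    have := sum_sq_expand u v
    simp only [Pi.add_apply]
    rw [this, huv]; ring
  have e2 : ∑ i, ((u - v) i) ^ 2 = ∑ i, u i ^ 2 + ∑ i, v i ^ 2 := by
    have := sum_sq_expand u (-v)
    simp only [Pi.sub_apply, sub_eq_add_neg]
    simp only [Pi.neg_apply] at this
    rw [this]
    have : ∑ i, u i * (- v i) = 0 := by
      rw [← neg_zero, ← huv, ← Finset.sum_neg_distrib]
      apply Finset.sum_congr rfl; intro i _; ring
    rw [this]
    ring_nf
  have e3 : ∑ i, ((A *ᵥ (u + v)) i) ^ 2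
      = ∑ i, ((A *ᵥ u) i) ^ 2 + 2 * (∑ i, (A *ᵥ u) i * (A *ᵥ v) i) + ∑ i, ((A *ᵥ v) i) ^ 2 := by
    rw [Matrix.mulVec_add]
    exact sum_sq_expand _ _
  have e4 : ∑ i, ((A *ᵥ (u - v)) i) ^ 2
      = ∑ i, ((A *ᵥ u) i) ^ 2 - 2 * (∑ i, (A *ᵥ u) i * (A *ᵥ v) i) + ∑ i, ((A *ᵥ v) i) ^ 2 := by
    rw [Matrix.mulVec_sub]
    have := sum_sq_expand (A *ᵥ u) (-(A *ᵥ v))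
    simp only [Pi.neg_apply] at this
    simp only [Pi.sub_apply, sub_eq_add_neg]
    rw [show (∑ i, ((A *ᵥ u) i + -(A *ᵥ v) i) ^ 2) = _ from this]
    have h5 : ∑ i, (A *ᵥ u) i * (-(A *ᵥ v) i) = - ∑ i, (A *ᵥ u) i * (A *ᵥ v) i := by
      rw [← Finset.sum_neg_distrib]
      apply Finset.sum_congr rfl; intro i _; ring
    rw [h5]
    ring_nf
  -- combine
  have hub := h1.2
  have hlb := h2.1
  rw [e1, e3] at hub
  rw [e2, e4] at hlb
  show _ ≤ _
  nlinarith [hub, hlb]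

lemma inner_bound (hδ0 : 0 ≤ δ) (hA : RIP A s δ) (u v : Fin N → ℝ)
    (hdis : ∀ i, u i = 0 ∨ v i = 0)
    (hcard : ({i | u i ≠ 0} ∪ {i | v i ≠ 0}).ncard ≤ s) :
    ∑ i, (A *ᵥ u) i * (A *ᵥ v) i
      ≤ δ * Real.sqrt (∑ i, u i ^ 2) * Real.sqrt (∑ i, v i ^ 2) := by
  have hu0 : (0:ℝ) ≤ ∑ i, u i ^ 2 := Finset.sum_nonneg fun _ _ => sq_nonneg _
  have hv0 : (0:ℝ) ≤ ∑ i, v i ^ 2 := Finset.sum_nonneg fun _ _ => sq_nonneg _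
  set a := Real.sqrt (∑ i, u i ^ 2) with ha
  set b := Real.sqrt (∑ i, v i ^ 2) with hb
  by_cases hua : ∑ i, u i ^ 2 = 0
  · have : ∀ i, u i = 0 := by
      intro i
      have := (Finset.sum_eq_zero_iff_of_nonneg (fun i _ => sq_nonneg (u i))).1 hua i
        (Finset.mem_univ i)
      nlinarith [sq_nonneg (u i)]
    have hAu : A *ᵥ u = 0 := by
      funext k; simp [Matrix.mulVec, dotProduct, this]
    rw [hAu]
    simp only [Pi.zero_apply, zero_mul, Finset.sum_const_zero]
    positivity
  by_cases hvb : ∑ i, v i ^ 2 = 0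
  · have : ∀ i, v i = 0 := by
      intro i
      have := (Finset.sum_eq_zero_iff_of_nonneg (fun i _ => sq_nonneg (v i))).1 hvb i
        (Finset.mem_univ i)
      nlinarith [sq_nonneg (v i)]
    have hAv : A *ᵥ v = 0 := by
      funext k; simp [Matrix.mulVec, dotProduct, this]
    rw [hAv]
    simp only [Pi.zero_apply, mul_zero, Finset.sum_const_zero]
    positivity
  have hapos : 0 < a := Real.sqrt_pos.2 (lt_of_le_of_ne hu0 (Ne.symm hua))
  have hbpos : 0 < b := Real.sqrt_pos.2 (lt_of_le_of_ne hv0 (Ne.symm hvb))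
  have ha2 : a ^ 2 = ∑ i, u i ^ 2 := Real.sq_sqrt hu0
  have hb2 : b ^ 2 = ∑ i, v i ^ 2 := Real.sq_sqrt hv0
  set lam := a / b with hlam
  have hlpos : 0 < lam := div_pos hapos hbpos
  have hdis' : ∀ i, u i = 0 ∨ (lam • v) i = 0 := by
    intro i
    rcases hdis i with h | h
    · exact Or.inl h
    · right; simp [h]
  have hcard' : ({i | u i ≠ 0} ∪ {i | (lam • v) i ≠ 0}).ncard ≤ s := by
    refine le_trans (Set.ncard_le_ncard ?_ (Set.toFinite _)) hcard
    intro i hi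
    rcases hi with h | h
    · exact Or.inl h
    · right
      intro hv
      apply h
      simp [hv]
  have hbase := inner_base hA u (lam • v) hdis' hcard'
  have hAsmul : A *ᵥ (lam • v) = lam • (A *ᵥ v) := by
    rw [Matrix.mulVec_smul]
  rw [hAsmul] at hbase
  have hl : ∑ i, (A *ᵥ u) i * (lam • (A *ᵥ v)) i
      = lam * ∑ i, (A *ᵥ u) i * (A *ᵥ v) i := by
    rw [Finset.mul_sum]
    apply Finset.sum_congr rfl
    intro i _; simp [Pi.smul_apply, smul_eq_mul]; ring
  have hr : ∑ i, ((lam • v) i) ^ 2 = lam ^ 2 * ∑ i, v i ^ 2 := by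
    rw [Finset.mul_sum]
    apply Finset.sum_congr rfl
    intro i _; simp [Pi.smul_apply, smul_eq_mul]; ring
  rw [hl, hr] at hbase
  have key : lam * ∑ i, (A *ᵥ u) i * (A *ᵥ v) i ≤ δ * a ^ 2 := by
    have : δ / 2 * (∑ i, u i ^ 2 + lam ^ 2 * ∑ i, v i ^ 2) = δ * a ^ 2 := by
      rw [← ha2, ← hb2, hlam]
      field_simp
      ring
    linarith [hbase, this.symm.le, this.le]
  calc ∑ i, (A *ᵥ u) i * (A *ᵥ v) i
      = (1 / lam) * (lam * ∑ i, (A *ᵥ u) i * (A *ᵥ v) i) := by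
        field_simp
    _ ≤ (1 / lam) * (δ * a ^ 2) := by
        apply mul_le_mul_of_nonneg_left key
        positivity
    _ = δ * a * b := by
        rw [hlam]
        field_simp

lemma pinv_left (hδ1 : δ < 1) (hA : RIP A s δ) (S : Finset (Fin N))
    (hS : S.card ≤ s) (D : Matrix {j // j ∈ S} (Fin M) ℝ)
    (hD : IsPinv (colSub A S) D) : D * colSub A S = 1 := by
  set G := D * colSub A S with hG
  have hvec : ∀ z : {j // j ∈ S} → ℝ, G *ᵥ z = z := by
    intro z
    have h1 : colSub A S *ᵥ (G *ᵥ z) = colSub A S *ᵥ z := by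
      rw [Matrix.mulVec_mulVec, hG, ← Matrix.mul_assoc, hD.1]
    set d := G *ᵥ z - z with hd
    have h2 : colSub A S *ᵥ d = 0 := by
      rw [hd, Matrix.mulVec_sub, h1, sub_self]
    have h3 : A *ᵥ vlift S d = 0 := by
      rw [← mulVec_colSub, h2]
    have h4 := (hA (vlift S d) (by
      refine le_trans (ncard_supp_le (s := S) ?_) hS
      intro i hi
      by_contra hc
      simp [vlift, hc] at hi)).1
    rw [h3, sumsq_vlift] at h4
    have h4' : (1 - δ) * ∑ t, d t ^ 2 ≤ 0 := by simpa using h4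
    have h5 : ∑ t, d t ^ 2 ≤ 0 := by
      nlinarith [Finset.sum_nonneg (fun (t : {j // j ∈ S}) (_ : t ∈ Finset.univ) => sq_nonneg (d t))]
    have h6 : ∀ t, d t = 0 := by
      intro t
      have := (Finset.sum_eq_zero_iff_of_nonneg
        (fun (t : {j // j ∈ S}) (_ : t ∈ Finset.univ) => sq_nonneg (d t))).1
        (le_antisymm h5 (Finset.sum_nonneg fun t _ => sq_nonneg (d t))) t (Finset.mem_univ t)
      nlinarith [sq_nonneg (d t)]
    funext t
    have := h6 t
    rw [hd] at this
    simpa [sub_eq_zero] using this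
  ext p q
  have := congrFun (hvec (Pi.single q 1)) p
  rw [Matrix.mulVec_single] at this
  simpa [Matrix.one_apply, Pi.single_apply, eq_comm] using this

lemma proj_dot (S : Finset (Fin N)) (D : Matrix {j // j ∈ S} (Fin M) ℝ)
    (hD : IsPinv (colSub A S) D) (y : Fin M → ℝ) :
    ((colSub A S * D) *ᵥ y) ⬝ᵥ ((colSub A S * D) *ᵥ y) = y ⬝ᵥ ((colSub A S * D) *ᵥ y) := by
  set P := colSub A S * D with hP
  have hPP : P * P = P := by
    rw [hP, Matrix.mul_assoc, ← Matrix.mul_assoc D _ _, hD.2.1]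
  have hPt : Pᵀ = P := hD.2.2.1
  have hvm : (P *ᵥ y) ᵥ* P = P *ᵥ (P *ᵥ y) := by
    have h' : (P *ᵥ y) ᵥ* P = (P *ᵥ y) ᵥ* Pᵀ := by rw [hPt]
    rw [h', Matrix.vecMul_transpose]
  calc (P *ᵥ y) ⬝ᵥ (P *ᵥ y) = ((P *ᵥ y) ᵥ* P) ⬝ᵥ y := Matrix.dotProduct_mulVec _ _ _
    _ = (P *ᵥ (P *ᵥ y)) ⬝ᵥ y := by rw [hvm]
    _ = ((P * P) *ᵥ y) ⬝ᵥ y := by rw [Matrix.mulVec_mulVec]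
    _ = (P *ᵥ y) ⬝ᵥ y := by rw [hPP]
    _ = y ⬝ᵥ (P *ᵥ y) := dotProduct_comm _ _

lemma dot_self_eq_sumsq {m : ℕ} (v : Fin m → ℝ) : v ⬝ᵥ v = ∑ i, v i ^ 2 := by
  simp [dotProduct, sq]

lemma proj_contract (S : Finset (Fin N)) (D : Matrix {j // j ∈ S} (Fin M) ℝ)
    (hD : IsPinv (colSub A S) D) (y : Fin M → ℝ) :
    ∑ i, ((colSub A S * D) *ᵥ y) i ^ 2 ≤ ∑ i, y i ^ 2
      ∧ ∑ i, (y - (colSub A S * D) *ᵥ y) i ^ 2 ≤ ∑ i, y i ^ 2 := by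
  set P := colSub A S * D with hP
  have h1 := proj_dot S D hD y
  rw [← hP] at h1
  have hcs : (y ⬝ᵥ (P *ᵥ y)) ^ 2 ≤ (y ⬝ᵥ y) * ((P *ᵥ y) ⬝ᵥ (P *ᵥ y)) := by
    have := Finset.sum_mul_sq_le_sq_mul_sq Finset.univ y (P *ᵥ y)
    simpa [dotProduct, sq] using this
  have e1 : ∑ i, (P *ᵥ y) i ^ 2 = (P *ᵥ y) ⬝ᵥ (P *ᵥ y) := (dot_self_eq_sumsq _).symm
  have e2 : ∑ i, y i ^ 2 = y ⬝ᵥ y := (dot_self_eq_sumsq _).symm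
  have hnnP : 0 ≤ (P *ᵥ y) ⬝ᵥ (P *ᵥ y) := by
    rw [dot_self_eq_sumsq]
    exact Finset.sum_nonneg fun i _ => sq_nonneg _
  have hfirst : ∑ i, (P *ᵥ y) i ^ 2 ≤ ∑ i, y i ^ 2 := by
    rw [e1, e2]
    rcases eq_or_lt_of_le hnnP with hz | hpos
    · rw [← hz]
      rw [← e2]
      exact Finset.sum_nonneg fun i _ => sq_nonneg _
    · nlinarith [hcs, h1]
  refine ⟨hfirst, ?_⟩
  have e3 : ∑ i, (y - P *ᵥ y) i ^ 2 = y ⬝ᵥ y - y ⬝ᵥ (P *ᵥ y) := by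
    have hexp : ∀ i, (y - P *ᵥ y) i ^ 2
        = y i ^ 2 - 2 * (y i * (P *ᵥ y) i) + (P *ᵥ y) i ^ 2 := by
      intro i; rw [Pi.sub_apply]; ring
    calc ∑ i, (y - P *ᵥ y) i ^ 2
        = ∑ i, (y i ^ 2 - 2 * (y i * (P *ᵥ y) i) + (P *ᵥ y) i ^ 2) :=
          Finset.sum_congr rfl fun i _ => hexp i
      _ = (∑ i, y i ^ 2 - 2 * ∑ i, y i * (P *ᵥ y) i) + ∑ i, (P *ᵥ y) i ^ 2 := by
          rw [Finset.sum_add_distrib, Finset.sum_sub_distrib, Finset.mul_sum]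
      _ = y ⬝ᵥ y - 2 * (y ⬝ᵥ (P *ᵥ y)) + (P *ᵥ y) ⬝ᵥ (P *ᵥ y) := by
          rw [← e2, ← e1]; rfl
      _ = y ⬝ᵥ y - y ⬝ᵥ (P *ᵥ y) := by rw [← h1]; ring
  rw [e3, e2]
  have hnn : 0 ≤ y ⬝ᵥ (P *ᵥ y) := by rw [← h1]; exact hnnP
  linarith

lemma pinv_bound (hδ1 : δ < 1) (hA : RIP A s δ) (S : Finset (Fin N)) (hS : S.card ≤ s)
    (D : Matrix {j // j ∈ S} (Fin M) ℝ) (hD : IsPinv (colSub A S) D) (y : Fin M → ℝ) :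
    (1 - δ) * ∑ t, ((D *ᵥ y) t) ^ 2 ≤ ∑ i, y i ^ 2 := by
  set z := D *ᵥ y with hz
  have hAz : A *ᵥ vlift S z = (colSub A S * D) *ᵥ y := by
    rw [← mulVec_colSub, hz, Matrix.mulVec_mulVec]
  have e2 := (hA (vlift S z) (by
    refine le_trans (ncard_supp_le (s := S) ?_) hS
    intro i hi
    by_contra hc
    simp [vlift, hc] at hi)).1
  rw [sumsq_vlift] at e2
  have e4 : ∑ i, ((A *ᵥ vlift S z) i) ^ 2 ≤ ∑ i, y i ^ 2 := by
    rw [hAz]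
    exact (proj_contract S D hD y).1
  calc (1 - δ) * ∑ t, (z t) ^ 2 ≤ ∑ i, ((A *ᵥ vlift S z) i) ^ 2 := e2
    _ ≤ ∑ i, y i ^ 2 := e4

lemma pinv_cross (hδ0 : 0 ≤ δ) (hδ1 : δ < 1) (hA : RIP A s δ)
    (S : Finset (Fin N)) (D : Matrix {j // j ∈ S} (Fin M) ℝ) (hD : IsPinv (colSub A S) D)
    (T : Finset (Fin N)) (hST : S.card + T.card ≤ s)
    (u : Fin N → ℝ) (huS : ∀ i ∈ S, u i = 0) (huT : ∀ i, u i ≠ 0 → i ∈ T) :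
    ∑ t, ((D *ᵥ (A *ᵥ u)) t) ^ 2 ≤ (δ / (1 - δ)) ^ 2 * ∑ i, u i ^ 2 := by
  have h1δ : (0:ℝ) < 1 - δ := by linarith
  set z := D *ᵥ (A *ᵥ u) with hz
  set zt := vlift S z with hzt
  have hAz : A *ᵥ zt = (colSub A S * D) *ᵥ (A *ᵥ u) := by
    rw [hzt, ← mulVec_colSub, hz, Matrix.mulVec_mulVec]
  have e1 : (A *ᵥ zt) ⬝ᵥ (A *ᵥ zt) = (A *ᵥ u) ⬝ᵥ (A *ᵥ zt) := by
    rw [hAz]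
    exact proj_dot S D hD (A *ᵥ u)
  have e2 := (hA zt (by
    refine le_trans (ncard_supp_le (s := S) ?_) (le_trans (Nat.le_add_right _ _) hST)
    intro i hi
    by_contra hc
    simp [hzt, vlift, hc] at hi)).1
  have e3 : ∑ i, (A *ᵥ u) i * (A *ᵥ zt) i
      ≤ δ * Real.sqrt (∑ i, u i ^ 2) * Real.sqrt (∑ i, zt i ^ 2) := by
    apply inner_bound hδ0 hA
    · intro i
      by_cases h : i ∈ S
      · exact Or.inl (huS i h)
      · right; simp [hzt, vlift, h]
    · refine le_trans (Set.ncard_union_le _ _) ?_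
      have c1 : {i | u i ≠ 0}.ncard ≤ T.card := ncard_supp_le huT
      have c2 : {i | zt i ≠ 0}.ncard ≤ S.card := ncard_supp_le (by
        intro i hi
        by_contra hc
        simp [hzt, vlift, hc] at hi)
      omega
  set a := Real.sqrt (∑ i, u i ^ 2) with ha
  set t := Real.sqrt (∑ i, zt i ^ 2) with hT
  have hu0 : (0:ℝ) ≤ ∑ i, u i ^ 2 := Finset.sum_nonneg fun _ _ => sq_nonneg _
  have hz0 : (0:ℝ) ≤ ∑ i, zt i ^ 2 := Finset.sum_nonneg fun _ _ => sq_nonneg _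
  have ha2 : a ^ 2 = ∑ i, u i ^ 2 := Real.sq_sqrt hu0
  have ht2 : t ^ 2 = ∑ i, zt i ^ 2 := Real.sq_sqrt hz0
  have hta : 0 ≤ t := Real.sqrt_nonneg _
  have haa : 0 ≤ a := Real.sqrt_nonneg _
  have hgoal_lhs : ∑ s', (z s') ^ 2 = t ^ 2 := by
    rw [ht2, hzt, sumsq_vlift]
  have hAzz : ∑ i, ((A *ᵥ zt) i) ^ 2 = (A *ᵥ zt) ⬝ᵥ (A *ᵥ zt) := (dot_self_eq_sumsq _).symm
  have hAuz : (A *ᵥ u) ⬝ᵥ (A *ᵥ zt) = ∑ i, (A *ᵥ u) i * (A *ᵥ zt) i := rfl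
  -- (1-δ) t^2 ≤ δ a t
  have key : (1 - δ) * t ^ 2 ≤ δ * a * t := by
    rw [ht2]
    calc (1 - δ) * ∑ i, zt i ^ 2 ≤ ∑ i, ((A *ᵥ zt) i) ^ 2 := e2
      _ = (A *ᵥ u) ⬝ᵥ (A *ᵥ zt) := by rw [hAzz, e1]
      _ ≤ δ * a * t := by rw [hAuz]; exact e3
  rw [hgoal_lhs, ← ha2, div_pow, div_mul_eq_mul_div, le_div_iff₀ (by positivity)]
  rcases eq_or_lt_of_le hta with h0 | hpos
  · rw [← h0]
    ring_nf
    positivity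
  · have h6 : (1 - δ) * t ≤ δ * a := by
      have := mul_le_mul_of_nonneg_right key (le_of_lt (inv_pos.2 hpos))
      calc (1 - δ) * t = (1 - δ) * t ^ 2 * t⁻¹ := by field_simp
        _ ≤ δ * a * t * t⁻¹ := by
            apply mul_le_mul_of_nonneg_right key (le_of_lt (inv_pos.2 hpos))
        _ = δ * a := by field_simp
    have h7 : ((1 - δ) * t) ^ 2 ≤ (δ * a) ^ 2 := by
      apply pow_le_pow_left₀ (by positivity) h6
    nlinarith [h7]

variable {L : ℕ}

lemma sum_sq_congr {ι : Type*} [Fintype ι] {f g : ι → ℝ} (h : ∀ i, f i = g i) :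
    ∑ i, f i ^ 2 = ∑ i, g i ^ 2 :=
  Finset.sum_congr rfl fun i _ => by rw [h i]

lemma col_mul'' {m k : ℕ} (B' : Matrix (Fin m) (Fin k) ℝ) (X : Matrix (Fin k) (Fin L) ℝ)
    (i : Fin m) (j : Fin L) : (B' * X) i j = (B' *ᵥ (fun t => X t j)) i := by
  simp [Matrix.mul_apply, Matrix.mulVec, dotProduct]

lemma col_mul_sub {m : ℕ} (S : Finset (Fin N)) (D : Matrix {j // j ∈ S} (Fin m) ℝ)
    (Y : Matrix (Fin m) (Fin L) ℝ) (t : {j // j ∈ S}) (j : Fin L) :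
    (D * Y) t j = (D *ᵥ (fun i => Y i j)) t := by
  simp [Matrix.mul_apply, Matrix.mulVec, dotProduct]

lemma col_colSub_mul (S : Finset (Fin N)) (Y : Matrix {j // j ∈ S} (Fin L) ℝ)
    (i : Fin M) (j : Fin L) :
    (colSub A S * Y) i j = (colSub A S *ᵥ (fun t => Y t j)) i := by
  simp [Matrix.mul_apply, Matrix.mulVec, dotProduct]

lemma rip_col_upper (hδ0 : 0 ≤ δ) (hA : RIP A s δ) (Y : Matrix (Fin N) (Fin L) ℝ)
    (h : ∀ j, {i | Y i j ≠ 0}.ncard ≤ s) :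
    frob (A * Y) ≤ Real.sqrt (1 + δ) * frob Y := by
  apply frob_le_of_col (c := 1 + δ) (by linarith)
  intro j
  calc ∑ i, ((A * Y) i j) ^ 2 = ∑ i, ((A *ᵥ fun k => Y k j) i) ^ 2 :=
        sum_sq_congr (fun i => col_mul'' A Y i j)
    _ ≤ (1 + δ) * ∑ i, Y i j ^ 2 := (hA (fun k => Y k j) (h j)).2

lemma frob_pinv_mul (hδ1 : δ < 1) (hA : RIP A s δ) (S : Finset (Fin N)) (hS : S.card ≤ s)
    (D : Matrix {j // j ∈ S} (Fin M) ℝ) (hD : IsPinv (colSub A S) D)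
    (Y : Matrix (Fin M) (Fin L) ℝ) :
    frob (D * Y) ≤ Real.sqrt (1 / (1 - δ)) * frob Y := by
  have h1δ : (0:ℝ) < 1 - δ := by linarith
  apply frob_le_of_col (c := 1 / (1 - δ)) (by positivity)
  intro j
  have hb := pinv_bound hδ1 hA S hS D hD (fun i => Y i j)
  calc ∑ t, ((D * Y) t j) ^ 2 = ∑ t, ((D *ᵥ fun i => Y i j) t) ^ 2 :=
        sum_sq_congr (fun t => col_mul_sub S D Y t j)
    _ ≤ 1 / (1 - δ) * ∑ i, Y i j ^ 2 := by
        rw [one_div, ← div_eq_inv_mul, le_div_iff₀ h1δ]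
        linarith [hb]

lemma frob_cross (hδ0 : 0 ≤ δ) (hδ1 : δ < 1) (hA : RIP A s δ)
    (S : Finset (Fin N)) (D : Matrix {j // j ∈ S} (Fin M) ℝ) (hD : IsPinv (colSub A S) D)
    (T : Finset (Fin N)) (hST : S.card + T.card ≤ s)
    (U : Matrix (Fin N) (Fin L) ℝ) (hUS : ∀ i ∈ S, ∀ j, U i j = 0)
    (hUT : ∀ i j, U i j ≠ 0 → i ∈ T) :
    frob (D * (A * U)) ≤ (δ / (1 - δ)) * frob U := by
  have h1δ : (0:ℝ) < 1 - δ := by linarith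
  have hq : Real.sqrt ((δ / (1 - δ)) ^ 2) = δ / (1 - δ) := Real.sqrt_sq (by positivity)
  rw [← hq]
  apply frob_le_of_col (c := (δ / (1 - δ)) ^ 2) (by positivity)
  intro j
  have hc := pinv_cross hδ0 hδ1 hA S D hD T hST (fun k => U k j)
    (fun i hi => hUS i hi j) (fun i hi => hUT i j hi)
  calc ∑ t, ((D * (A * U)) t j) ^ 2
      = ∑ t, ((D *ᵥ (A *ᵥ fun k => U k j)) t) ^ 2 := by
        apply sum_sq_congr
        intro t
        have hAU : (fun i => (A * U) i j) = (A *ᵥ fun k => U k j) :=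
          funext fun i => col_mul'' A U i j
        rw [col_mul_sub S D (A * U) t j, hAU]
    _ ≤ (δ / (1 - δ)) ^ 2 * ∑ i, (U i j) ^ 2 := hc

lemma frob_resid_contract (S : Finset (Fin N)) (D : Matrix {j // j ∈ S} (Fin M) ℝ)
    (hD : IsPinv (colSub A S) D) (C : Matrix (Fin M) (Fin L) ℝ) :
    frob (C - colSub A S * (D * C)) ≤ frob C := by
  have hcols : ∀ j, ∑ i, ((C - colSub A S * (D * C)) i j) ^ 2 ≤ 1 * ∑ i, (C i j) ^ 2 := by
    intro j
    rw [one_mul]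
    have hcol : ∀ i, (C - colSub A S * (D * C)) i j
        = ((fun i => C i j) - (colSub A S * D) *ᵥ (fun i => C i j)) i := by
      intro i
      rw [Matrix.sub_apply, Pi.sub_apply]
      have h1 : (fun t => (D * C) t j) = D *ᵥ (fun i => C i j) :=
        funext fun t => col_mul_sub S D C t j
      rw [col_colSub_mul S (D * C) i j, h1, Matrix.mulVec_mulVec]
    calc ∑ i, ((C - colSub A S * (D * C)) i j) ^ 2
        = ∑ i, (((fun i => C i j) - (colSub A S * D) *ᵥ (fun i => C i j)) i) ^ 2 :=
          sum_sq_congr hcol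
      _ ≤ ∑ i, (C i j) ^ 2 := (proj_contract S D hD (fun i => C i j)).2
  have h := frob_le_of_col (c := (1:ℝ)) zero_le_one (C - colSub A S * (D * C)) C hcols
  simpa using h

lemma frob_resid_lower (hδ1 : δ < 1) (hA : RIP A s δ)
    (S : Finset (Fin N)) (D : Matrix {j // j ∈ S} (Fin M) ℝ) (hD : IsPinv (colSub A S) D)
    (T : Finset (Fin N)) (hST : S.card + T.card ≤ s)
    (U : Matrix (Fin N) (Fin L) ℝ) (hUS : ∀ i ∈ S, ∀ j, U i j = 0)
    (hUT : ∀ i j, U i j ≠ 0 → i ∈ T) :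
    Real.sqrt (1 - δ) * frob U ≤ frob (A * U - colSub A S * (D * (A * U))) := by
  have h1δ : (0:ℝ) < 1 - δ := by linarith
  apply frob_ge_of_col (c := 1 - δ) (le_of_lt h1δ)
  intro j
  set u : Fin N → ℝ := fun k => U k j with hu
  set z := D *ᵥ (A *ᵥ u) with hzz
  set zt := vlift S z with hzt
  have hcol : ∀ i, (A * U - colSub A S * (D * (A * U))) i j = (A *ᵥ (u - zt)) i := by
    intro i
    rw [Matrix.sub_apply, Matrix.mulVec_sub, Pi.sub_apply]
    have e1 : (A * U) i j = (A *ᵥ u) i := col_mul'' A U i j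
    have e2 : (colSub A S * (D * (A * U))) i j = (A *ᵥ zt) i := by
      rw [col_colSub_mul S (D * (A * U)) i j]
      have h2 : (fun t => (D * (A * U)) t j) = z := by
        funext t
        rw [col_mul_sub S D (A * U) t j, hzz]
        have hAU : (fun i' => (A * U) i' j) = (A *ᵥ u) := funext fun i' => col_mul'' A U i' j
        rw [hAU]
      rw [h2, mulVec_colSub A S z, ← hzt]
    rw [e1, e2]
  have hrip := (hA (u - zt) (by
    have hsup : ∀ i, (u - zt) i ≠ 0 → i ∈ T ∪ S := by
      intro i hi
      by_cases h : i ∈ S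
      · exact Finset.mem_union_right _ h
      · apply Finset.mem_union_left
        apply hUT i j
        intro hc
        apply hi
        have hz0 : zt i = 0 := by simp [hzt, vlift, h]
        have hu0 : u i = 0 := hc
        simp [Pi.sub_apply, hz0, hu0]
    refine le_trans (ncard_supp_le hsup) (le_trans (Finset.card_union_le _ _) ?_)
    omega)).1
  have hpoint : ∀ i, u i ^ 2 ≤ ((u - zt) i) ^ 2 := by
    intro i
    by_cases h : i ∈ S
    · have h0 : u i = 0 := hUS i h j
      rw [Pi.sub_apply, h0]
      simp
      positivity
    · have h0 : zt i = 0 := by simp [hzt, vlift, h]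
      rw [Pi.sub_apply, h0, sub_zero]
  calc (1 - δ) * ∑ i, (U i j) ^ 2 ≤ (1 - δ) * ∑ i, ((u - zt) i) ^ 2 := by
        apply mul_le_mul_of_nonneg_left _ (le_of_lt h1δ)
        exact Finset.sum_le_sum fun i _ => hpoint i
    _ ≤ ∑ i, ((A *ᵥ (u - zt)) i) ^ 2 := hrip
    _ = ∑ i, ((A * U - colSub A S * (D * (A * U))) i j) ^ 2 :=
        (sum_sq_congr hcol).symm

end RIPfacts
section Select

noncomputable def rowNorm' {m n : Type*} [Fintype n] (X : Matrix m n ℝ) (i : m) : ℝ :=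
  Real.sqrt (∑ j, (X i j) ^ 2)

lemma rowNorm'_nonneg {m n : Type*} [Fintype n] (X : Matrix m n ℝ) (i : m) :
    0 ≤ rowNorm' X i := Real.sqrt_nonneg _

lemma rowNorm'_sq {m n : Type*} [Fintype n] (X : Matrix m n ℝ) (i : m) :
    rowNorm' X i ^ 2 = ∑ j, (X i j) ^ 2 :=
  Real.sq_sqrt (Finset.sum_nonneg fun _ _ => sq_nonneg _)

lemma sum_sel {N L : ℕ} (V : Matrix (Fin N) (Fin L) ℝ) (Ω Φ : Finset (Fin N))
    (hcard : Ω.card ≤ Φ.card)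
    (hsel : ∀ i ∈ Ω, ∀ j ∈ Φ, rowNorm' V i ≤ rowNorm' V j) :
    ∑ i ∈ Ω, ∑ j, V i j ^ 2 ≤ ∑ i ∈ Φ, ∑ j, V i j ^ 2 := by
  have hrw : ∀ (S : Finset (Fin N)), ∑ i ∈ S, ∑ j, V i j ^ 2 = ∑ i ∈ S, rowNorm' V i ^ 2 :=
    fun S => Finset.sum_congr rfl fun i _ => (rowNorm'_sq V i).symm
  rw [hrw, hrw]
  rcases Finset.eq_empty_or_nonempty Ω with hΩe | hΩne
  · rw [hΩe]
    simp only [Finset.sum_empty]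
    exact Finset.sum_nonneg fun i _ => sq_nonneg _
  have hΦne : Φ.Nonempty := by
    rw [← Finset.card_pos]
    calc 0 < Ω.card := Finset.card_pos.2 hΩne
      _ ≤ Φ.card := hcard
  obtain ⟨j₀, hj₀, hmin⟩ := Finset.exists_min_image Φ (rowNorm' V) hΦne
  have hc0 : 0 ≤ rowNorm' V j₀ ^ 2 := sq_nonneg _
  calc ∑ i ∈ Ω, rowNorm' V i ^ 2
      ≤ Ω.card • (rowNorm' V j₀ ^ 2) := by
        apply Finset.sum_le_card_nsmul
        intro i hi
        exact pow_le_pow_left₀ (rowNorm'_nonneg V i) (hsel i hi j₀ hj₀) 2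
    _ ≤ Φ.card • (rowNorm' V j₀ ^ 2) := by
        apply nsmul_le_nsmul_left hc0 hcard
    _ ≤ ∑ i ∈ Φ, rowNorm' V i ^ 2 := by
        apply Finset.card_nsmul_le_sum
        intro j hj
        exact pow_le_pow_left₀ (rowNorm'_nonneg V j₀) (hmin j hj) 2

lemma frob_sq_restrict_finset {N L : ℕ} (Z : Matrix (Fin N) (Fin L) ℝ) (S : Finset (Fin N)) :
    frob (restrictRows Z {i | i ∈ S}) ^ 2 = ∑ i ∈ S, ∑ j, Z i j ^ 2 := by
  rw [frob_sq]
  rw [show (∑ i, ∑ j, (restrictRows Z {i | i ∈ S}) i j ^ 2)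
      = ∑ i ∈ S, ∑ j, (restrictRows Z {i | i ∈ S}) i j ^ 2 from
    (Finset.sum_subset (Finset.subset_univ S) (fun i _ hi => by
      apply Finset.sum_eq_zero
      intro j _
      have : (restrictRows Z {i | i ∈ S}) i j = 0 := by
        simp [restrictRows, Set.indicator, hi]
      rw [this]
      simp)).symm]
  apply Finset.sum_congr rfl
  intro i hi
  apply Finset.sum_congr rfl
  intro j _
  have : (restrictRows Z {i | i ∈ S}) i j = Z i j := by
    simp [restrictRows, Set.indicator, hi]
  rw [this]

lemma frob_restrict_le {N L : ℕ} (Z : Matrix (Fin N) (Fin L) ℝ) (S : Set (Fin N)) :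
    frob (restrictRows Z S) ≤ frob Z := by
  apply frob_mono_entry
  intro i j
  by_cases h : i ∈ S <;> simp [restrictRows, Set.indicator, h] <;> positivity

end Select

section MoreHelpers

variable {M N L : ℕ}

lemma restrict_split'' (X : Matrix (Fin N) (Fin L) ℝ) (S : Finset (Fin N)) :
    X = restrictRows X {i | i ∈ S} + restrictRows X {i | i ∉ S} := by
  ext i j
  by_cases h : i ∈ S <;> simp [restrictRows, Set.indicator, h, Matrix.add_apply]

lemma mul_restrict_mem (A : Matrix (Fin M) (Fin N) ℝ) (S : Finset (Fin N))
    (X : Matrix (Fin N) (Fin L) ℝ) :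
    A * restrictRows X {i | i ∈ S}
      = colSub A S * (Matrix.of fun (s : {j // j ∈ S}) j => X s.1 j) := by
  ext i j
  rw [Matrix.mul_apply, Matrix.mul_apply]
  rw [sum_vlift (S := S) (fun k => A i k * (restrictRows X {i | i ∈ S}) k j) (by
    intro k hk
    simp [restrictRows, Set.indicator, hk])]
  apply Finset.sum_congr rfl
  intro s _
  have hs : (s : Fin N) ∈ S := s.2
  simp [colSub, restrictRows, Set.indicator, hs, Matrix.submatrix, Matrix.of_apply]

lemma resid_shift (A : Matrix (Fin M) (Fin N) ℝ) (S : Finset (Fin N))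
    (D : Matrix {j // j ∈ S} (Fin M) ℝ) (hD : IsPinv (colSub A S) D)
    (B C : Matrix (Fin M) (Fin L) ℝ) (Z : Matrix {j // j ∈ S} (Fin L) ℝ)
    (hBC : B - C = colSub A S * Z) :
    B - colSub A S * (D * B) = C - colSub A S * (D * C) := by
  have key : colSub A S * (D * (colSub A S * Z)) = colSub A S * Z := by
    rw [← Matrix.mul_assoc, ← Matrix.mul_assoc, hD.1]
  have hBC' : B = C + colSub A S * Z := by
    rw [← hBC]; abel
  rw [hBC', Matrix.mul_add, Matrix.mul_add, key]
  abel

end MoreHelpers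

end Aux





open Aux

set_option maxHeartbeats 2000000 in
theorem stmt10 {M N L R K : ℕ} (A : Matrix (Fin M) (Fin N) ℝ) (δ : ℝ)
    (hδ0 : 0 ≤ δ) (hδ : δ < 1/2) (hRIP : RIP A (R + K) δ)
    (X : Matrix (Fin N) (Fin L) ℝ) (T : Finset (Fin N))
    (hsupp : ∀ i, X i ≠ 0 → i ∈ T) (hTK : T.card ≤ K)
    (W B : Matrix (Fin M) (Fin L) ℝ) (hB : B = A * X + W)
    (Γ : Finset (Fin N)) (hΓ : Γ.card ≤ R)
    (DΓ : Matrix {j // j ∈ Γ} (Fin M) ℝ) (hDΓ : IsPinv (colSub A Γ) DΓ)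
    (V : Matrix (Fin N) (Fin L) ℝ)
    (hV : V = fun i j => if h : i ∈ Γ then (DΓ * B) ⟨i, h⟩ j else 0)
    (That : Finset (Fin N)) (hThatΓ : That ⊆ Γ) (hThatK : That.card = K)
    (hsel : ∀ i ∈ That, ∀ j ∉ That, rowNorm V j ≤ rowNorm V i)
    (DT : Matrix {j // j ∈ That} (Fin M) ℝ) (hDT : IsPinv (colSub A That) DT)
    (Ti : Finset (Fin N)) (hTiR : Ti.card ≤ R)
    (Di : Matrix {j // j ∈ Ti} (Fin M) ℝ) (hDi : IsPinv (colSub A Ti) Di)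
    (hXΓ : frob (restrictRows X {i | i ∉ Γ}) ≠ 0)
    (hXTi : frob (restrictRows X {i | i ∉ Ti}) ≠ 0)
    (ζ ηi : ℝ)
    (hζ : ζ = frob W / frob (restrictRows X {i | i ∉ Γ}))
    (hη : ηi = frob (restrictRows X {i | i ∉ Γ}) / frob (restrictRows X {i | i ∉ Ti}))
    (hcond : Real.sqrt (1 + δ) / (1 - δ) * (1 + δ + 3 * ζ) ≤
      (1 - 2 * δ) / (ηi * Real.sqrt (1 - δ)) - ζ) :
    frob (B - colSub A That * (DT * B)) ≤ frob (B - colSub A Ti * (Di * B)) := by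
  have hδ1 : δ < 1 := by linarith
  have h1δ : (0:ℝ) < 1 - δ := by linarith
  have hΓK : Γ.card ≤ R + K := le_trans hΓ (Nat.le_add_right R K)
  have hTiRK : Ti.card ≤ R + K := le_trans hTiR (Nat.le_add_right R K)
  have hX0 : ∀ i, i ∉ T → ∀ j, X i j = 0 := by
    intro i hi j
    by_contra hc
    exact hi (hsupp i (fun h0 => hc (congrFun h0 j)))
  set Xc := restrictRows X {i | i ∉ Γ} with hXcdef
  set XT := restrictRows X {i | i ∉ That} with hXTdef
  set Xi := restrictRows X {i | i ∉ Ti} with hXidef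
  have hXc_mem : ∀ i ∈ Γ, ∀ j, Xc i j = 0 := by
    intro i hi j
    simp [hXcdef, restrictRows, Set.indicator, hi]
  have hXc_not : ∀ i, i ∉ Γ → ∀ j, Xc i j = X i j := by
    intro i hi j
    simp [hXcdef, restrictRows, Set.indicator, hi]
  have hXc_T : ∀ i j, Xc i j ≠ 0 → i ∈ T := by
    intro i j h
    by_cases hi : i ∈ Γ
    · exact absurd (hXc_mem i hi j) h
    · rw [hXc_not i hi j] at h
      exact hsupp i (fun h0 => h (congrFun h0 j))
  have hXi_T : ∀ i j, Xi i j ≠ 0 → i ∈ T := by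
    intro i j h
    by_cases hi : i ∈ Ti
    · exfalso; apply h; simp [hXidef, restrictRows, Set.indicator, hi]
    · apply hsupp i
      intro h0
      apply h
      simp [hXidef, restrictRows, Set.indicator, hi, congrFun h0 j]
  have hXT_T : ∀ i j, XT i j ≠ 0 → i ∈ T := by
    intro i j h
    by_cases hi : i ∈ That
    · exfalso; apply h; simp [hXTdef, restrictRows, Set.indicator, hi]
    · apply hsupp i
      intro h0
      apply h
      simp [hXTdef, restrictRows, Set.indicator, hi, congrFun h0 j]
  -- decomposition of V
  set XΓs : Matrix {j // j ∈ Γ} (Fin L) ℝ := Matrix.of fun s j => X s.1 j with hXΓs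
  set C0 : Matrix (Fin M) (Fin L) ℝ := A * Xc + W with hC0
  set E := mlift Γ (DΓ * C0) with hE
  have hB2 : B = colSub A Γ * XΓs + C0 := by
    rw [hB, hC0]
    conv_lhs => rw [restrict_split'' X Γ]
    rw [Matrix.mul_add, mul_restrict_mem A Γ X, ← hXΓs, ← hXcdef]
    rw [add_assoc]
  have hDleft : DΓ * colSub A Γ = 1 := pinv_left hδ1 hRIP Γ hΓK DΓ hDΓ
  have hDB : DΓ * B = XΓs + DΓ * C0 := by
    rw [hB2, Matrix.mul_add, ← Matrix.mul_assoc, hDleft, Matrix.one_mul]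
  have hVmem : ∀ i (h : i ∈ Γ) j, V i j = X i j + E i j := by
    intro i h j
    rw [hV]
    show (if h' : i ∈ Γ then (DΓ * B) ⟨i, h'⟩ j else 0) = X i j + E i j
    rw [dif_pos h, hDB]
    rw [Matrix.add_apply]
    have e1 : XΓs ⟨i, h⟩ j = X i j := rfl
    have e2 : (DΓ * C0) ⟨i, h⟩ j = E i j := by simp [hE, mlift, h]
    rw [e1, e2]
  have hVnot : ∀ i, i ∉ Γ → ∀ j, V i j = 0 := by
    intro i h j
    rw [hV]
    exact dif_neg h
  have hEnot : ∀ i, i ∉ Γ → ∀ j, E i j = 0 := by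
    intro i h j
    simp [hE, mlift, h]
  -- bound on frob E
  have hEb : frob E ≤ δ / (1 - δ) * frob Xc + Real.sqrt (1 / (1 - δ)) * frob W := by
    have hfE : frob E = frob (DΓ * C0) := by rw [hE]; exact frob_mlift Γ _
    have hsplitC : DΓ * C0 = DΓ * (A * Xc) + DΓ * W := by rw [hC0, Matrix.mul_add]
    have h1 := frob_triangle (DΓ * (A * Xc)) (DΓ * W)
    have h2 := frob_cross hδ0 hδ1 hRIP Γ DΓ hDΓ T (by omega) Xc
      (fun i hi j => hXc_mem i hi j) hXc_T
    have h3 := frob_pinv_mul hδ1 hRIP Γ hΓK DΓ hDΓ W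
    rw [hfE, hsplitC]
    linarith
  -- selection step
  set Ω := (T ∩ Γ) \ That with hΩdef
  set Φ := That \ T with hΦdef
  have hXT_split : XT = Xc + restrictRows X {i | i ∈ Ω} := by
    ext i j
    rw [Matrix.add_apply]
    by_cases hth : i ∈ That
    · have hiΓ : i ∈ Γ := hThatΓ hth
      have hΩn : i ∉ Ω := by simp [hΩdef, hth]
      simp [hXTdef, hXcdef, restrictRows, Set.indicator, hth, hiΓ, hΩn]
    · by_cases hiΓ : i ∈ Γ
      · by_cases hiT : i ∈ T
        · have hΩy : i ∈ Ω := by simp [hΩdef, hiT, hiΓ, hth]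
          simp [hXTdef, hXcdef, restrictRows, Set.indicator, hth, hiΓ, hΩy]
        · have hΩn : i ∉ Ω := by simp [hΩdef, hiT]
          simp [hXTdef, hXcdef, restrictRows, Set.indicator, hth, hiΓ, hΩn, hX0 i hiT j]
      · have hΩn : i ∉ Ω := by simp [hΩdef]; intro _ h; exact absurd h hiΓ
        simp [hXTdef, hXcdef, restrictRows, Set.indicator, hth, hiΓ, hΩn]
  have hXΩeq : restrictRows X {i | i ∈ Ω}
      = restrictRows V {i | i ∈ Ω} + (- restrictRows E {i | i ∈ Ω}) := by
    ext i j
    rw [Matrix.add_apply, Matrix.neg_apply]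
    have hred : ∀ (Z : Matrix (Fin N) (Fin L) ℝ),
        restrictRows Z {i | i ∈ Ω} i j = Set.indicator {i | i ∈ Ω} (fun i' => Z i' j) i :=
      fun Z => rfl
    rw [hred X, hred V, hred E]
    by_cases hiΩ : i ∈ Ω
    · have hiΓ : i ∈ Γ := by
        have := Finset.mem_sdiff.1 hiΩ
        exact (Finset.mem_inter.1 this.1).2
      have hV' := hVmem i hiΓ j
      have hiΩ' : i ∈ {i | i ∈ Ω} := hiΩ
      rw [Set.indicator_of_mem hiΩ', Set.indicator_of_mem hiΩ', Set.indicator_of_mem hiΩ']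
      rw [hV']
      ring
    · have hiΩ' : i ∉ {i | i ∈ Ω} := hiΩ
      rw [Set.indicator_of_notMem hiΩ', Set.indicator_of_notMem hiΩ',
        Set.indicator_of_notMem hiΩ']
      ring
  have hcardΩΦ : Ω.card ≤ Φ.card := by
    have h1 : Ω ⊆ T \ That := by
      intro i hi
      rw [Finset.mem_sdiff] at *
      rw [Finset.mem_inter] at hi
      exact ⟨hi.1.1, hi.2⟩
    have h2 := Finset.card_le_card h1
    have e1 : (T \ That).card + (T ∩ That).card = T.card :=
      Finset.card_sdiff_add_card_inter T That
    have e2 : (That \ T).card + (That ∩ T).card = That.card :=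
      Finset.card_sdiff_add_card_inter That T
    have e3 : (T ∩ That).card = (That ∩ T).card := by rw [Finset.inter_comm]
    have e4 : T.card ≤ That.card := by rw [hThatK]; exact hTK
    have e5 : Φ.card = (That \ T).card := by rw [hΦdef]
    have e6 : Ω.card = ((T ∩ Γ) \ That).card := by rw [hΩdef]
    omega
  have hselΩΦ : ∀ i ∈ Ω, ∀ j ∈ Φ, rowNorm' V i ≤ rowNorm' V j := by
    intro i hi j hj
    have hiT : i ∉ That := (Finset.mem_sdiff.1 hi).2
    have hjT : j ∈ That := (Finset.mem_sdiff.1 hj).1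
    exact hsel j hjT i hiT
  have hVΩ_le : frob (restrictRows V {i | i ∈ Ω}) ≤ frob E := by
    have h1 : frob (restrictRows V {i | i ∈ Ω}) ^ 2 ≤ frob E ^ 2 := by
      rw [frob_sq_restrict_finset]
      calc ∑ i ∈ Ω, ∑ j, V i j ^ 2 ≤ ∑ i ∈ Φ, ∑ j, V i j ^ 2 :=
            sum_sel V Ω Φ hcardΩΦ hselΩΦ
        _ = ∑ i ∈ Φ, ∑ j, E i j ^ 2 := by
            apply Finset.sum_congr rfl
            intro i hi
            apply Finset.sum_congr rfl
            intro j _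
            have hiThat : i ∈ That := (Finset.mem_sdiff.1 hi).1
            have hiT : i ∉ T := (Finset.mem_sdiff.1 hi).2
            have : V i j = E i j := by
              rw [hVmem i (hThatΓ hiThat) j, hX0 i hiT j, zero_add]
            rw [this]
        _ ≤ frob E ^ 2 := by
            rw [frob_sq]
            apply Finset.sum_le_sum_of_subset_of_nonneg (Finset.subset_univ Φ)
            intro i _ _
            exact Finset.sum_nonneg fun j _ => sq_nonneg _
    calc frob (restrictRows V {i | i ∈ Ω})
        = Real.sqrt (frob (restrictRows V {i | i ∈ Ω}) ^ 2) :=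
          (Real.sqrt_sq (frob_nonneg _)).symm
      _ ≤ Real.sqrt (frob E ^ 2) := Real.sqrt_le_sqrt h1
      _ = frob E := Real.sqrt_sq (frob_nonneg _)
  have hXTb : frob XT ≤ frob Xc + 2 * frob E := by
    have t1 : frob XT ≤ frob Xc + frob (restrictRows X {i | i ∈ Ω}) := by
      rw [hXT_split]
      exact frob_triangle _ _
    have t2 := frob_triangle (restrictRows V {i | i ∈ Ω}) (- restrictRows E {i | i ∈ Ω})
    rw [← hXΩeq, frob_neg] at t2
    have t3 := frob_restrict_le E {i | i ∈ Ω}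
    linarith
  -- upper residual bound
  set XTs : Matrix {j // j ∈ That} (Fin L) ℝ := Matrix.of fun s j => X s.1 j with hXTs
  set C1 : Matrix (Fin M) (Fin L) ℝ := A * XT + W with hC1
  have hBC1 : B - C1 = colSub A That * XTs := by
    rw [hB, hC1]
    have hXdiff : X - XT = restrictRows X {i | i ∈ That} := by
      rw [hXTdef]
      exact sub_eq_of_eq_add (restrict_split'' X That)
    calc A * X + W - (A * XT + W) = A * X - A * XT := by abel
      _ = A * (X - XT) := by rw [Matrix.mul_sub]
      _ = A * restrictRows X {i | i ∈ That} := by rw [hXdiff]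
      _ = colSub A That * XTs := mul_restrict_mem A That X
  have hupper : frob (B - colSub A That * (DT * B))
      ≤ Real.sqrt (1 + δ) * frob XT + frob W := by
    rw [resid_shift A That DT hDT B C1 XTs hBC1]
    calc frob (C1 - colSub A That * (DT * C1)) ≤ frob C1 :=
          frob_resid_contract That DT hDT C1
      _ ≤ frob (A * XT) + frob W := by rw [hC1]; exact frob_triangle _ _
      _ ≤ Real.sqrt (1 + δ) * frob XT + frob W := by
          have := rip_col_upper hδ0 hRIP XT (fun j => by
            refine le_trans (ncard_supp_le (s := T) (fun i hi => hXT_T i j hi)) ?_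
            omega)
          linarith
  -- lower residual bound
  set XTis : Matrix {j // j ∈ Ti} (Fin L) ℝ := Matrix.of fun s j => X s.1 j with hXTis
  set C2 : Matrix (Fin M) (Fin L) ℝ := A * Xi + W with hC2
  have hBC2 : B - C2 = colSub A Ti * XTis := by
    rw [hB, hC2]
    have hXdiff : X - Xi = restrictRows X {i | i ∈ Ti} := by
      rw [hXidef]
      exact sub_eq_of_eq_add (restrict_split'' X Ti)
    calc A * X + W - (A * Xi + W) = A * X - A * Xi := by abel
      _ = A * (X - Xi) := by rw [Matrix.mul_sub]
      _ = A * restrictRows X {i | i ∈ Ti} := by rw [hXdiff]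
      _ = colSub A Ti * XTis := mul_restrict_mem A Ti X
  have hlower : Real.sqrt (1 - δ) * frob Xi - frob W
      ≤ frob (B - colSub A Ti * (Di * B)) := by
    rw [resid_shift A Ti Di hDi B C2 XTis hBC2]
    have hC2split : C2 - colSub A Ti * (Di * C2)
        = (A * Xi - colSub A Ti * (Di * (A * Xi))) + (W - colSub A Ti * (Di * W)) := by
      rw [hC2, Matrix.mul_add, Matrix.mul_add]
      abel
    rw [hC2split]
    have t1 := frob_sub_le (A * Xi - colSub A Ti * (Di * (A * Xi)))
      (W - colSub A Ti * (Di * W))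
    have t2 := frob_resid_lower hδ1 hRIP Ti Di hDi T (by omega) Xi
      (fun i hi j => by simp [hXidef, restrictRows, Set.indicator, hi]) hXi_T
    have t3 := frob_resid_contract Ti Di hDi W
    linarith
  -- final arithmetic
  set x := frob Xc with hx
  set xi := frob Xi with hxi
  set xT := frob XT with hxT
  set w := frob W with hw
  have hxpos : 0 < x := lt_of_le_of_ne (frob_nonneg _) (Ne.symm hXΓ)
  have hxipos : 0 < xi := lt_of_le_of_ne (frob_nonneg _) (Ne.symm hXTi)
  have hwnn : 0 ≤ w := frob_nonneg _
  have hxTnn : 0 ≤ xT := frob_nonneg _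
  set t := Real.sqrt (1 - δ) with ht
  set s1 := Real.sqrt (1 + δ) with hs1
  have ht2 : t ^ 2 = 1 - δ := Real.sq_sqrt (le_of_lt h1δ)
  have htpos : 0 < t := Real.sqrt_pos.2 h1δ
  have ht1 : t ≤ 1 := by
    have h2' := Real.sqrt_le_sqrt (show 1 - δ ≤ 1 by linarith)
    rw [Real.sqrt_one] at h2'
    rw [ht]; exact h2'
  have hs1ge : 1 ≤ s1 := by
    have h2' := Real.sqrt_le_sqrt (show (1:ℝ) ≤ 1 + δ by linarith)
    rw [Real.sqrt_one] at h2'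
    rw [hs1]; exact h2'
  have hsqrtinv : Real.sqrt (1 / (1 - δ)) = 1 / t := by
    rw [ht, one_div, one_div, Real.sqrt_inv]
  have hζx : ζ * x = w := by
    rw [hζ]
    field_simp
  have hζnn : 0 ≤ ζ := by
    rw [hζ]
    positivity
  -- chain
  have step1 : frob (B - colSub A That * (DT * B)) ≤ s1 * xT + w := hupper
  have step2 : xT ≤ (1 + δ) / (1 - δ) * x + (2 / t) * w := by
    have : δ / (1 - δ) * x + Real.sqrt (1 / (1 - δ)) * w
        = δ / (1 - δ) * x + (1 / t) * w := by rw [hsqrtinv]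
    have hEb' : frob E ≤ δ / (1 - δ) * x + (1 / t) * w := by
      rw [← this]; exact hEb
    have expand : x + 2 * (δ / (1 - δ) * x + (1 / t) * w)
        = (1 + δ) / (1 - δ) * x + (2 / t) * w := by
      field_simp
      ring
    calc xT ≤ x + 2 * frob E := hXTb
      _ ≤ x + 2 * (δ / (1 - δ) * x + (1 / t) * w) := by linarith
      _ = (1 + δ) / (1 - δ) * x + (2 / t) * w := expand
  have step3 : s1 * ((1 + δ) / (1 - δ) * x + (2 / t) * w) + w
      ≤ s1 / (1 - δ) * (1 + δ + 3 * ζ) * x := by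
    have hkey : 2 * s1 * t + t ^ 2 ≤ 3 * s1 := by nlinarith
    have hrhs : s1 / (1 - δ) * (1 + δ + 3 * ζ) * x
        = s1 * ((1 + δ) / (1 - δ)) * x + 3 * (s1 / (1 - δ)) * w := by
      rw [← hζx]
      field_simp
    rw [hrhs]
    have hwterm : s1 * ((2 / t) * w) + w ≤ 3 * (s1 / (1 - δ)) * w := by
      have hco : s1 * (2 / t) + 1 ≤ 3 * (s1 / (1 - δ)) := by
        rw [← ht2]
        have ht2pos : (0:ℝ) < t ^ 2 := by positivity
        rw [show s1 * (2 / t) = (2 * s1) / t from by ring,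
          div_add' _ _ _ (ne_of_gt htpos),
          show (3:ℝ) * (s1 / t ^ 2) = (3 * s1) / t ^ 2 from by ring,
          div_le_div_iff₀ htpos ht2pos]
        nlinarith [mul_le_mul_of_nonneg_left hkey htpos.le]
      nlinarith [mul_le_mul_of_nonneg_right hco hwnn]
    have hmul : s1 * ((1 + δ) / (1 - δ) * x + (2 / t) * w)
        = s1 * ((1 + δ) / (1 - δ)) * x + s1 * ((2 / t) * w) := by ring
    rw [hmul]
    linarith
  have step4 : s1 / (1 - δ) * (1 + δ + 3 * ζ) * x
      ≤ ((1 - 2 * δ) / (ηi * t) - ζ) * x := by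
    exact mul_le_mul_of_nonneg_right hcond (le_of_lt hxpos)
  have step5 : ((1 - 2 * δ) / (ηi * t) - ζ) * x = (1 - 2 * δ) / t * xi - w := by
    rw [hη, ← hζx]
    have hηt : (x / xi) * t ≠ 0 := by positivity
    field_simp
  have step6 : (1 - 2 * δ) / t * xi ≤ t * xi := by
    apply mul_le_mul_of_nonneg_right _ (le_of_lt hxipos)
    rw [div_le_iff₀ htpos]
    have htt : t * t = 1 - δ := by rw [← ht2]; ring
    linarith
  calc frob (B - colSub A That * (DT * B)) ≤ s1 * xT + w := step1
    _ ≤ s1 * ((1 + δ) / (1 - δ) * x + (2 / t) * w) + w := by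
        have := mul_le_mul_of_nonneg_left step2 (by positivity : (0:ℝ) ≤ s1)
        linarith
    _ ≤ s1 / (1 - δ) * (1 + δ + 3 * ζ) * x := step3
    _ ≤ ((1 - 2 * δ) / (ηi * t) - ζ) * x := step4
    _ = (1 - 2 * δ) / t * xi - w := step5
    _ ≤ t * xi - w := by linarith
    _ ≤ frob (B - colSub A Ti * (Di * B)) := hlower
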